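/- Let X be a topological space with basepoint x₀ whose path component containing x₀ is covered by every open cover under consideration. For every open cover 𝒰 of X there exists a path open cover 𝒱 of (X,x₀) with π̃(𝒱,x₀) ⊆ π(𝒰,x₀); consequently, every Spanier subgroup of π₁(X,x₀) contains a path Spanier subgroup, and the path Spanier topology on π₁(X,x₀) is finer than the Spanier subgroup topology. -/

import Mathlib

/-!
Choosing for every point `y` a member `u_y ∈ 𝒰` containing it, the path open cover
`V_α := u_{α(1)}` turns every generator of `π̃(𝒱, x₀)` into a generator of `π(𝒰, x₀)`.
For the topologies, a coset `g • H` of a Spanier subgroup is the union of the cosets `h • K`,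
`h ∈ g • H`, of a path Spanier subgroup `K ≤ H`, hence open in the path Spanier topology.
-/

open TopologicalSpace
open scoped Topology Pointwise

attribute [local instance] Path.Homotopic.setoid

/-- The collection of all left cosets `g • H` of members of a family of subgroups. -/
def leftCosets {G : Type*} [Group G] (Sig : Set (Subgroup G)) : Set (Set G) :=
  {s | ∃ g : G, ∃ H ∈ Sig, s = g • (H : Set G)}

/-- A neighbourhood family on a group `G`: a (nonempty) collection of subgroups such that any two
members contain a common member. -/
def IsNbhdFamily {G : Type*} [Group G] (Sig : Set (Subgroup G)) : Prop :=
  Sig.Nonempty ∧ ∀ H ∈ Sig, ∀ K ∈ Sig, ∃ S ∈ Sig, S ≤ H ⊓ K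

/-- The subgroup topology on `G` determined by the family `Sig`: the topology generated by all
left cosets of members of `Sig`. -/
def subgroupTopology {G : Type*} [Group G] (Sig : Set (Subgroup G)) : TopologicalSpace G :=
  generateFrom (leftCosets Sig)

variable {X : Type*} [TopologicalSpace X]

/-- The homotopy class of a loop, as an element of the fundamental group. -/
noncomputable def fgClass {x₀ : X} (γ : Path x₀ x₀) : FundamentalGroup X x₀ :=
  FundamentalGroup.fromPath ⟦γ⟧

/-- An open cover of the space `X`. -/
def IsOpenCover (U : Set (Set X)) : Prop :=
  (∀ u ∈ U, IsOpen u) ∧ ⋃₀ U = Set.univ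

/-- The Spanier subgroup `π(𝒰, x₀)` of the fundamental group determined by an open cover `𝒰`:
the subgroup generated by all classes `[α * β * α⁻¹]` with `α` a path starting at `x₀` and `β`
a loop at `α(1)` lying in some member of `𝒰`. -/
noncomputable def spanierSubgroup (U : Set (Set X)) (x₀ : X) :
    Subgroup (FundamentalGroup X x₀) :=
  Subgroup.closure
    {g | ∃ (x : X) (α : Path x₀ x) (β : Path x x) (u : Set X), u ∈ U ∧ Set.range β ⊆ u ∧
      g = fgClass ((α.trans β).trans α.symm)}

/-- The collection of all Spanier subgroups of `π₁(X, x₀)`. -/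
def spanierFamily (x₀ : X) : Set (Subgroup (FundamentalGroup X x₀)) :=
  {H | ∃ U : Set (Set X), IsOpenCover U ∧ H = spanierSubgroup U x₀}

/-- A path open cover of `(X, x₀)`: a family of open sets `V x α`, indexed by the paths `α` in
`X` from `x₀` to `x`, with `α(1) ∈ V x α`. -/
def IsPathOpenCover (x₀ : X) (V : (x : X) → Path x₀ x → Set X) : Prop :=
  ∀ (x : X) (α : Path x₀ x), IsOpen (V x α) ∧ α 1 ∈ V x α

/-- The path Spanier subgroup `π̃(𝒱, x₀)` determined by a path open cover `𝒱`: the subgroup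
generated by all classes `[α * β * α⁻¹]` with `α` a path starting at `x₀` and `β` a loop at
`α(1)` lying in `V_α`. -/
noncomputable def pathSpanierSubgroup (x₀ : X) (V : (x : X) → Path x₀ x → Set X) :
    Subgroup (FundamentalGroup X x₀) :=
  Subgroup.closure
    {g | ∃ (x : X) (α : Path x₀ x) (β : Path x x), Set.range β ⊆ V x α ∧
      g = fgClass ((α.trans β).trans α.symm)}

/-- The collection of all path Spanier subgroups of `π₁(X, x₀)`. -/
def pathSpanierFamily (x₀ : X) : Set (Subgroup (FundamentalGroup X x₀)) :=
  {H | ∃ V : (x : X) → Path x₀ x → Set X, IsPathOpenCover x₀ V ∧ H = pathSpanierSubgroup x₀ V}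

section SubgroupTopology

variable {G : Type*} [Group G]

theorem isOpen_smul_of_mem_subgroupTopology {Sig : Set (Subgroup G)} {H : Subgroup G}
    (hH : H ∈ Sig) (g : G) : IsOpen[subgroupTopology Sig] (g • (H : Set G)) :=
  isOpen_generateFrom_of_mem ⟨g, H, hH, rfl⟩

theorem smul_coe_eq_biUnion_smul_of_le {H K : Subgroup G} (hKH : K ≤ H) (g : G) :
    g • (H : Set G) = ⋃ h ∈ g • (H : Set G), h • (K : Set G) := by
  ext y
  simp only [Set.mem_iUnion, Set.mem_smul_set, smul_eq_mul, SetLike.mem_coe]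
  constructor
  · rintro ⟨h, hh, rfl⟩
    exact ⟨g * h, ⟨h, hh, rfl⟩, 1, K.one_mem, mul_one _⟩
  · rintro ⟨_, ⟨h, hh, rfl⟩, k, hk, rfl⟩
    exact ⟨h * k, H.mul_mem hh (hKH hk), (mul_assoc ..).symm⟩

theorem subgroupTopology_le_of_forall_exists_le {Sig Sig' : Set (Subgroup G)}
    (hle : ∀ H ∈ Sig, ∃ K ∈ Sig', K ≤ H) : subgroupTopology Sig' ≤ subgroupTopology Sig := by
  refine le_generateFrom ?_
  rintro _ ⟨g, H, hH, rfl⟩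
  obtain ⟨K, hK, hKH⟩ := hle H hH
  rw [smul_coe_eq_biUnion_smul_of_le hKH g]
  exact @isOpen_biUnion _ _ (subgroupTopology Sig') _ _ fun h _ =>
    isOpen_smul_of_mem_subgroupTopology hK h

end SubgroupTopology

theorem exists_isPathOpenCover_pathSpanierSubgroup_le {U : Set (Set X)} (hU : IsOpenCover U)
    (x₀ : X) : ∃ V : (x : X) → Path x₀ x → Set X,
      IsPathOpenCover x₀ V ∧ pathSpanierSubgroup x₀ V ≤ spanierSubgroup U x₀ := by
  have hcover : ∀ y : X, ∃ u ∈ U, y ∈ u := fun y =>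
    Set.mem_sUnion.mp (hU.2.symm ▸ Set.mem_univ y)
  choose u hu hyu using hcover
  refine ⟨fun x _ => u x, fun x α => ⟨hU.1 _ (hu x), by simpa using hyu x⟩, ?_⟩
  refine Subgroup.closure_mono ?_
  rintro g ⟨x, α, β, hβ, rfl⟩
  exact ⟨x, α, β, u x, hu x, hβ, rfl⟩

/-- every Spanier subgroup contains a path Spanier subgroup (for every open cover
`𝒰` there is a path open cover `𝒱` with `π̃(𝒱, x₀) ⊆ π(𝒰, x₀)`), and consequently the path
Spanier topology on `π₁(X, x₀)` is finer than the Spanier subgroup topology.  (Open covers of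
`X` in particular cover the path component of `x₀`.) -/
theorem statement17 (x₀ : X) :
    (∀ U : Set (Set X), IsOpenCover U → ∃ V : (x : X) → Path x₀ x → Set X,
        IsPathOpenCover x₀ V ∧ pathSpanierSubgroup x₀ V ≤ spanierSubgroup U x₀) ∧
    subgroupTopology (pathSpanierFamily x₀) ≤ subgroupTopology (spanierFamily x₀) := by
  refine ⟨fun U hU => exists_isPathOpenCover_pathSpanierSubgroup_le hU x₀, ?_⟩
  refine subgroupTopology_le_of_forall_exists_le ?_
  rintro _ ⟨U, hU, rfl⟩
  obtain ⟨V, hV, hle⟩ := exists_isPathOpenCover_pathSpanierSubgroup_le hU x₀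
  exact ⟨_, ⟨V, hV, rfl⟩, hle⟩
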